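/- For every n ≥ 1 and every rational m, the polynomials f_m^{(n)}(X) and r^{(n)}(X) have no common root in ℂ. -/
import Mathlib


open Polynomial

/-- h(i) = 0, -1, -1, 0, 1, 1 according as i = 0,1,2,3,4,5 (mod 6). -/
def hcoef (i : ℕ) : ℤ :=
  match i % 6 with
  | 0 => 0 | 1 => -1 | 2 => -1 | 3 => 0 | 4 => 1 | _ => 1

/-- g(i) = 1, -m, -m-1, -1, m, m+1 according as i = 0,1,2,3,4,5 (mod 6). -/
def gcoef (m : ℚ) (i : ℕ) : ℚ :=
  match i % 6 with
  | 0 => 1 | 1 => -m | 2 => -m - 1 | 3 => -1 | 4 => m | _ => m + 1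

/-- f_m^{(n)}(X) = sum_{i=0}^n C(n,i) X^i g(n-i). -/
noncomputable def fpol (m : ℚ) (n : ℕ) : ℚ[X] :=
  ∑ i ∈ Finset.range (n + 1), C ((n.choose i : ℚ) * gcoef m (n - i)) * X ^ i

/-- r^{(n)}(X) = sum_{i=0}^n C(n,i) X^i h(n-i). -/
noncomputable def rpol (n : ℕ) : ℤ[X] :=
  ∑ i ∈ Finset.range (n + 1), C ((n.choose i : ℤ) * hcoef (n - i)) * X ^ i

namespace Stmt7Aux

noncomputable def ζ : ℂ := ⟨1/2, Real.sqrt 3 / 2⟩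

noncomputable def Bq (m : ℚ) : ℂ := 1/2 + ((2*(m:ℂ)+1) * (2*ζ - 1)) / 6

noncomputable def cc : ℂ := (2*ζ - 1) / 3

lemma hζ2 : ζ^2 = ζ - 1 := by
  have h3 : (Real.sqrt 3) ^ 2 = 3 := Real.sq_sqrt (by norm_num)
  have : ζ = (1/2 : ℂ) + (Real.sqrt 3 / 2 : ℝ) * Complex.I := by
    apply Complex.ext <;> simp [ζ]
  rw [this]
  have hI : Complex.I ^ 2 = -1 := Complex.I_sq
  have h3' : ((Real.sqrt 3 : ℝ) : ℂ) ^ 2 = 3 := by exact_mod_cast congrArg (fun x : ℝ => (x : ℂ)) h3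
  push_cast
  linear_combination (((Real.sqrt 3 : ℝ) : ℂ)^2/4) * hI - (1/4:ℂ) * h3'

lemma hζ6 : ζ^6 = 1 := by
  linear_combination (ζ^4 + ζ^3 - ζ - 1) * hζ2

lemma hη6 : (1 - ζ)^6 = 1 := by
  linear_combination (ζ^4 - 5*ζ^3 + 9*ζ^2 - 6*ζ) * hζ2

lemma ζ_ne : ζ ≠ 1 - ζ := by
  intro h
  have him := congrArg Complex.im h
  have : Real.sqrt 3 / 2 = -(Real.sqrt 3 / 2) := by
    simpa [ζ] using him
  have hpos : 0 < Real.sqrt 3 := Real.sqrt_pos.mpr (by norm_num)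
  linarith

lemma two_ζ_ne : 2 * ζ - 1 ≠ 0 := by
  intro h
  have him := congrArg Complex.im h
  have hpos : 0 < Real.sqrt 3 := Real.sqrt_pos.mpr (by norm_num)
  simp [ζ] at him

lemma cc_ne : cc ≠ 0 :=
  div_ne_zero two_ζ_ne (by norm_num)

lemma pow_mod6 (x : ℂ) (hx : x ^ 6 = 1) (j : ℕ) : x ^ j = x ^ (j % 6) := by
  conv_lhs => rw [← Nat.div_add_mod j 6]
  rw [pow_add, pow_mul, hx, one_pow, one_mul]

lemma gcoef_mod (m : ℚ) (j : ℕ) : gcoef m j = gcoef m (j % 6) := by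
  unfold gcoef
  rw [Nat.mod_mod_of_dvd j (dvd_refl 6)]

lemma hcoef_mod (j : ℕ) : hcoef j = hcoef (j % 6) := by
  unfold hcoef
  rw [Nat.mod_mod_of_dvd j (dvd_refl 6)]

lemma key_g (m : ℚ) (j : ℕ) :
    ((gcoef m j : ℚ) : ℂ) = Bq m * ζ ^ j + (1 - Bq m) * (1 - ζ) ^ j := by
  rw [pow_mod6 ζ hζ6, pow_mod6 (1-ζ) hη6, gcoef_mod]
  have h6 : j % 6 < 6 := Nat.mod_lt _ (by norm_num)
  set k := j % 6 with hk
  clear_value k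
  unfold Bq
  interval_cases k <;>
    · simp only [gcoef]
      push_cast
      first
      | linear_combination (0:ℂ) * hζ2
      | linear_combination (-(2/3 : ℂ) - (4/3)*(m:ℂ)) * hζ2
      | linear_combination (-(5/3 : ℂ) - (4/3)*(m:ℂ)) * hζ2
      | linear_combination (-((5/3:ℂ)+(1/3)*(m:ℂ)) - (-(2/3:ℂ)+(-4/3)*(m:ℂ))*ζ - ((2/3:ℂ)+(4/3)*(m:ℂ))*ζ^2) * hζ2
      | linear_combination (-((2/3:ℂ)+(-2/3)*(m:ℂ)) - (-(7/3:ℂ)+(-8/3)*(m:ℂ))*ζ - ((7/3:ℂ)+(8/3)*(m:ℂ))*ζ^2) * hζ2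
      | linear_combination (-((-1/3:ℂ)+(-2/3)*(m:ℂ)) - ((-4:ℂ)+(-3)*(m:ℂ))*ζ - ((14/3:ℂ)+(13/3)*(m:ℂ))*ζ^2 - ((-4/3:ℂ)+(-8/3)*(m:ℂ))*ζ^3 - ((2/3:ℂ)+(4/3)*(m:ℂ))*ζ^4) * hζ2

lemma key_h (j : ℕ) :
    ((hcoef j : ℤ) : ℂ) = cc * (ζ ^ j - (1 - ζ) ^ j) := by
  rw [pow_mod6 ζ hζ6, pow_mod6 (1-ζ) hη6, hcoef_mod]
  have h6 : j % 6 < 6 := Nat.mod_lt _ (by norm_num)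
  set k := j % 6 with hk
  clear_value k
  unfold cc
  interval_cases k <;>
    · simp only [hcoef]
      push_cast
      first
      | linear_combination (0:ℂ) * hζ2
      | linear_combination (-(4/3):ℂ) * hζ2
      | linear_combination (-(1/3:ℂ) + (4/3)*ζ - (4/3)*ζ^2) * hζ2
      | linear_combination ((2/3:ℂ) + (8/3)*ζ - (8/3)*ζ^2) * hζ2
      | linear_combination ((2/3:ℂ) + 3*ζ - (13/3)*ζ^2 + (8/3)*ζ^3 - (4/3)*ζ^4) * hζ2

lemma feval (m : ℚ) (n : ℕ) (z : ℂ) :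
    aeval z (fpol m n) = Bq m * (z + ζ) ^ n + (1 - Bq m) * (z + (1 - ζ)) ^ n := by
  rw [add_pow, add_pow, Finset.mul_sum, Finset.mul_sum, ← Finset.sum_add_distrib]
  simp only [fpol, map_sum, map_mul, map_pow, aeval_X, aeval_C]
  refine Finset.sum_congr rfl fun i hi => ?_
  have hg := key_g m (n - i)
  simp only [eq_ratCast]
  rw [hg]
  push_cast
  ring

lemma reval (n : ℕ) (z : ℂ) :
    aeval z (rpol n) = cc * ((z + ζ) ^ n - (z + (1 - ζ)) ^ n) := by
  rw [add_pow, add_pow, ← Finset.sum_sub_distrib, Finset.mul_sum]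
  simp only [rpol, map_sum, map_mul, map_pow, aeval_X, aeval_C]
  refine Finset.sum_congr rfl fun i hi => ?_
  have hh := key_h (n - i)
  simp only [eq_intCast]
  rw [hh]
  push_cast
  ring

end Stmt7Aux

theorem stmt7 (n : ℕ) (hn : 1 ≤ n) (m : ℚ) (z : ℂ) :
    ¬(aeval z (fpol m n) = 0 ∧ aeval z (rpol n) = 0) := by
  rintro ⟨hf, hr⟩
  open Stmt7Aux in
  have hfe : Bq m * (z + ζ) ^ n + (1 - Bq m) * (z + (1 - ζ)) ^ n = 0 := by
    rw [← Stmt7Aux.feval]; exact hf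
  have hre : Stmt7Aux.cc * ((z + Stmt7Aux.ζ) ^ n - (z + (1 - Stmt7Aux.ζ)) ^ n) = 0 := by
    rw [← Stmt7Aux.reval]; exact hr
  have h1 : (z + Stmt7Aux.ζ) ^ n = (z + (1 - Stmt7Aux.ζ)) ^ n := by
    rcases mul_eq_zero.mp hre with h | h
    · exact absurd h Stmt7Aux.cc_ne
    · exact sub_eq_zero.mp h
  have h2 : (z + Stmt7Aux.ζ) ^ n = 0 := by
    linear_combination hfe + (1 - Stmt7Aux.Bq m) * h1
  have h3 : z + Stmt7Aux.ζ = 0 := by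
    exact pow_eq_zero_iff (by omega) |>.mp h2
  have h4 : z + (1 - Stmt7Aux.ζ) = 0 := by
    exact pow_eq_zero_iff (by omega) |>.mp (h1 ▸ h2)
  have : Stmt7Aux.ζ = 1 - Stmt7Aux.ζ := by
    linear_combination h3 - h4
  exact Stmt7Aux.ζ_ne this
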